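/- Let α ∈ (0,1). There exists a constant C > 0 such that for every v ∈ C^{2,α}([0,1]×S¹), sup_{[0,1]×S¹} |v| ≤ C( sup_{[0,1]×S¹} |Δv| + sup_{y ∈ S¹} |∂_x v(0,y)| + sup_{y ∈ S¹} |v(1,y)| ). -/

import Mathlib

open Set Real

noncomputable section

/-- The strip `[0,1] × ℝ`, representing `[0,1] × S¹` via `1`-periodicity in `y`. -/
def Strip : Set (ℝ × ℝ) := Set.Icc (0:ℝ) 1 ×ˢ (Set.univ : Set ℝ)

/-- `x`-partial derivative (one-sided at the endpoints of `[0,1]`). -/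
def pdx (v : ℝ → ℝ → ℝ) (x y : ℝ) : ℝ := derivWithin (fun t => v t y) (Set.Icc 0 1) x

/-- `y`-partial derivative. -/
def pdy (v : ℝ → ℝ → ℝ) (x y : ℝ) : ℝ := deriv (fun s => v x s) y

def pdxx (v : ℝ → ℝ → ℝ) (x y : ℝ) : ℝ := derivWithin (fun t => pdx v t y) (Set.Icc 0 1) x

def pdxy (v : ℝ → ℝ → ℝ) (x y : ℝ) : ℝ := deriv (fun s => pdx v x s) y

def pdyy (v : ℝ → ℝ → ℝ) (x y : ℝ) : ℝ := deriv (fun s => pdy v x s) y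

/-- Laplacian `Δv = ∂²v/∂x² + ∂²v/∂y²`. -/
def lap (v : ℝ → ℝ → ℝ) (x y : ℝ) : ℝ := pdxx v x y + pdyy v x y

/-- `1`-periodicity in the second variable (i.e. a function on `[0,1] × S¹`). -/
def PeriodicY (v : ℝ → ℝ → ℝ) : Prop := ∀ x y, v x (y + 1) = v x y

/-- `v ∈ C²([0,1] × S¹)`. -/
def C2Strip (v : ℝ → ℝ → ℝ) : Prop :=
  PeriodicY v ∧ ContDiffOn ℝ 2 (fun p : ℝ × ℝ => v p.1 p.2) Strip

/-- `v ∈ C^∞([0,1] × S¹)`. -/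
def SmoothStrip (v : ℝ → ℝ → ℝ) : Prop :=
  PeriodicY v ∧ ContDiffOn ℝ (⊤ : ℕ∞) (fun p : ℝ × ℝ => v p.1 p.2) Strip

/-- `f` is `a`-Hölder continuous on the strip. -/
def HolderStrip (a : ℝ) (f : ℝ → ℝ → ℝ) : Prop :=
  ∃ C : ℝ, ∀ x ∈ Set.Icc (0:ℝ) 1, ∀ x' ∈ Set.Icc (0:ℝ) 1, ∀ y y' : ℝ,
    |f x y - f x' y'| ≤ C * dist ((x, y) : ℝ × ℝ) ((x', y') : ℝ × ℝ) ^ a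

/-- sup of `|f|` over the strip. -/
def supStrip (f : ℝ → ℝ → ℝ) : ℝ :=
  sSup {r : ℝ | ∃ x ∈ Set.Icc (0:ℝ) 1, ∃ y : ℝ, r = |f x y|}

/-- `a`-Hölder seminorm over the strip. -/
def holStrip (a : ℝ) (f : ℝ → ℝ → ℝ) : ℝ :=
  sSup {r : ℝ | ∃ x ∈ Set.Icc (0:ℝ) 1, ∃ x' ∈ Set.Icc (0:ℝ) 1, ∃ y y' : ℝ,
    ((x, y) : ℝ × ℝ) ≠ ((x', y') : ℝ × ℝ) ∧
    r = |f x y - f x' y'| / dist ((x, y) : ℝ × ℝ) ((x', y') : ℝ × ℝ) ^ a}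

/-- `f ∈ C^{0,a}([0,1] × S¹)`. -/
def MemC0αStrip (a : ℝ) (f : ℝ → ℝ → ℝ) : Prop :=
  PeriodicY f ∧ ContinuousOn (fun p : ℝ × ℝ => f p.1 p.2) Strip ∧ HolderStrip a f

/-- `v ∈ C^{2,a}([0,1] × S¹)`. -/
def MemC2αStrip (a : ℝ) (v : ℝ → ℝ → ℝ) : Prop :=
  C2Strip v ∧ HolderStrip a (pdxx v) ∧ HolderStrip a (pdxy v) ∧ HolderStrip a (pdyy v)

/-- The `C^{0,a}` norm on the strip. -/
def normC0αStrip (a : ℝ) (f : ℝ → ℝ → ℝ) : ℝ := supStrip f + holStrip a f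

/-- The `C^{2,a}` norm on the strip. -/
def normC2αStrip (a : ℝ) (v : ℝ → ℝ → ℝ) : ℝ :=
  supStrip v + supStrip (pdx v) + supStrip (pdy v) + supStrip (pdxx v) + supStrip (pdxy v)
    + supStrip (pdyy v) + holStrip a (pdxx v) + holStrip a (pdxy v) + holStrip a (pdyy v)

/-- `1`-periodic functions on `ℝ`, i.e. functions on `S¹ = ℝ/ℤ`. -/
def PeriodicC (φ : ℝ → ℝ) : Prop := ∀ y, φ (y + 1) = φ y

def supCirc (φ : ℝ → ℝ) : ℝ := sSup {r : ℝ | ∃ y : ℝ, r = |φ y|}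

def holCirc (a : ℝ) (φ : ℝ → ℝ) : ℝ :=
  sSup {r : ℝ | ∃ y y' : ℝ, y ≠ y' ∧ r = |φ y - φ y'| / |y - y'| ^ a}

def HolderCirc (a : ℝ) (φ : ℝ → ℝ) : Prop :=
  ∃ C : ℝ, ∀ y y' : ℝ, |φ y - φ y'| ≤ C * |y - y'| ^ a

/-- `φ ∈ C^{1,a}(S¹)`. -/
def MemC1αCirc (a : ℝ) (φ : ℝ → ℝ) : Prop :=
  PeriodicC φ ∧ ContDiff ℝ 1 φ ∧ HolderCirc a (deriv φ)

/-- `φ ∈ C^{2,a}(S¹)`. -/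
def MemC2αCirc (a : ℝ) (φ : ℝ → ℝ) : Prop :=
  PeriodicC φ ∧ ContDiff ℝ 2 φ ∧ HolderCirc a (deriv (deriv φ))

/-- The `C^{1,a}` norm on the circle. -/
def normC1αCirc (a : ℝ) (φ : ℝ → ℝ) : ℝ :=
  supCirc φ + supCirc (deriv φ) + holCirc a (deriv φ)

/-- The `C^{2,a}` norm on the circle. -/
def normC2αCirc (a : ℝ) (φ : ℝ → ℝ) : ℝ :=
  supCirc φ + supCirc (deriv φ) + supCirc (deriv (deriv φ)) + holCirc a (deriv (deriv φ))


section AuxProof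

open Filter Topology Function

/-- Interior second derivative test at a local max. -/
lemma secondDeriv_nonpos_of_isLocalMax {f : ℝ → ℝ} {a b x : ℝ} (hx : x ∈ Set.Ioo a b)
    (hd : ∀ t ∈ Set.Ioo a b, DifferentiableAt ℝ f t)
    (hd2 : DifferentiableAt ℝ (deriv f) x)
    (hmax : IsLocalMax f x) : deriv (deriv f) x ≤ 0 := by
  by_contra hc
  push_neg at hc
  have h0 : deriv f x = 0 := hmax.deriv_eq_zero
  have hslope : Filter.Tendsto (slope (deriv f) x) (𝓝[≠] x) (𝓝 (deriv (deriv f) x)) := by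
    have h := hd2.hasDerivAt
    rw [hasDerivAt_iff_tendsto_slope] at h
    simpa using h
  have hslope' : Filter.Tendsto (slope (deriv f) x) (𝓝[>] x) (𝓝 (deriv (deriv f) x)) :=
    hslope.mono_left (nhdsWithin_mono x (fun t ht => ne_of_gt ht))
  have hpos : ∀ᶠ t in 𝓝[>] x, 0 < slope (deriv f) x t :=
    hslope'.eventually (eventually_gt_nhds hc)
  have hpos' : ∀ᶠ t in 𝓝[>] x, 0 < deriv f t := by
    filter_upwards [hpos, self_mem_nhdsWithin] with t ht hti
    rw [slope_def_field, h0, sub_zero] at ht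
    have htx : 0 < t - x := sub_pos.mpr hti
    have := mul_pos ht htx
    rwa [div_mul_cancel₀] at this
    exact ne_of_gt htx
  have hmax' : ∀ᶠ t in 𝓝[>] x, f t ≤ f x := hmax.filter_mono nhdsWithin_le_nhds
  have hIoo : ∀ᶠ t in 𝓝[>] x, t ∈ Set.Ioo a b :=
    eventually_nhdsWithin_of_eventually_nhds (Ioo_mem_nhds hx.1 hx.2)
  have hall : ∀ᶠ t in 𝓝[>] x, 0 < deriv f t ∧ f t ≤ f x ∧ t ∈ Set.Ioo a b := by
    filter_upwards [hpos', hmax', hIoo] with t h1 h2 h3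
    exact ⟨h1, h2, h3⟩
  obtain ⟨u, hu, hsub⟩ := mem_nhdsGT_iff_exists_Ioo_subset.1 hall
  set m := (x + u) / 2 with hm
  have hxm : x < m := by simp only [hm]; linarith [mem_Ioi.mp hu]
  have hmu : m < u := by simp only [hm]; linarith [mem_Ioi.mp hu]
  have hmono : StrictMonoOn f (Set.Icc x m) := by
    apply strictMonoOn_of_deriv_pos (convex_Icc x m)
    · intro t ht
      have hdt : DifferentiableAt ℝ f t := by
        rcases eq_or_lt_of_le ht.1 with h | h
        · rw [← h]; exact hd x hx
        · exact hd t (hsub ⟨h, lt_of_le_of_lt ht.2 hmu⟩).2.2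
      exact hdt.continuousAt.continuousWithinAt
    · intro t ht
      rw [interior_Icc] at ht
      exact (hsub ⟨ht.1, lt_trans ht.2 hmu⟩).1
  have h1 : f x < f m := hmono (Set.left_mem_Icc.mpr hxm.le) (Set.right_mem_Icc.mpr hxm.le) hxm
  have h2 : f m ≤ f x := (hsub ⟨hxm, hmu⟩).2.1
  linarith

/-- One-sided derivative test at the left end point of `[0,1]`. -/
lemma derivWithin_nonpos_left {f : ℝ → ℝ} {d : ℝ}
    (hf : HasDerivWithinAt f d (Set.Icc 0 1) 0)
    (hmax : ∀ t ∈ Set.Icc (0:ℝ) 1, f t ≤ f 0) : d ≤ 0 := by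
  rw [hasDerivWithinAt_iff_tendsto_slope] at hf
  have hset : Set.Icc (0:ℝ) 1 \ {0} = Set.Ioc 0 1 := by
    ext t
    simp only [Set.mem_diff, Set.mem_Icc, Set.mem_singleton_iff, Set.mem_Ioc]
    constructor
    · rintro ⟨⟨h1, h2⟩, h3⟩; exact ⟨lt_of_le_of_ne h1 (Ne.symm h3), h2⟩
    · rintro ⟨h1, h2⟩; exact ⟨⟨h1.le, h2⟩, ne_of_gt h1⟩
  rw [hset] at hf
  have hne : (𝓝[Set.Ioc (0:ℝ) 1] (0:ℝ)).NeBot := by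
    rw [← mem_closure_iff_nhdsWithin_neBot, closure_Ioc (one_ne_zero).symm]
    exact Set.left_mem_Icc.mpr zero_le_one
  refine le_of_tendsto hf ?_
  filter_upwards [self_mem_nhdsWithin] with t ht
  rw [slope_def_field]
  apply div_nonpos_of_nonpos_of_nonneg
  · have := hmax t ⟨ht.1.le, ht.2⟩
    linarith
  · linarith [ht.1]

lemma periodic_eq_fract {f : ℝ → ℝ} (h : Function.Periodic f 1) (y : ℝ) :
    f y = f (Int.fract y) := by
  rw [Int.fract]; simpa using (h.sub_int_mul_eq (x := y) (n := ⌊y⌋)).symm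

lemma periodic_deriv {f : ℝ → ℝ} (h : Function.Periodic f 1) :
    Function.Periodic (deriv f) 1 := by
  intro y
  have hf : (fun s => f (s + 1)) = f := funext h
  calc deriv f (y + 1) = deriv (fun s => f (s + 1)) y := (deriv_comp_add_const f 1 y).symm
  _ = deriv f y := by rw [hf]

lemma sliceX {v : ℝ → ℝ → ℝ} (hv : ContDiffOn ℝ 2 (fun p : ℝ × ℝ => v p.1 p.2) Strip)
    (y : ℝ) : ContDiffOn ℝ 2 (fun t => v t y) (Set.Icc (0:ℝ) 1) :=
  hv.comp ((contDiff_id.prodMk contDiff_const).contDiffOn) (fun t ht => ⟨ht, Set.mem_univ _⟩)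

lemma sliceY {v : ℝ → ℝ → ℝ} (hv : ContDiffOn ℝ 2 (fun p : ℝ × ℝ => v p.1 p.2) Strip)
    {x : ℝ} (hx : x ∈ Set.Icc (0:ℝ) 1) : ContDiff ℝ 2 (fun s => v x s) := by
  rw [← contDiffOn_univ]
  exact hv.comp ((contDiff_const.prodMk contDiff_id).contDiffOn) (fun s _ => ⟨hx, Set.mem_univ _⟩)

/-- Maximum principle for a strictly subharmonic function with strictly positive inward
derivative at `x = 0`: values are dominated by some value on `x = 1`. -/
lemma key_max (w : ℝ → ℝ → ℝ) (hper : PeriodicY w)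
    (hw : ContDiffOn ℝ 2 (fun p : ℝ × ℝ => w p.1 p.2) Strip)
    (hlap : ∀ x ∈ Set.Ioo (0:ℝ) 1, ∀ y : ℝ, 0 < pdxx w x y + pdyy w x y)
    (hx0 : ∀ y : ℝ, 0 < pdx w 0 y) :
    ∀ x ∈ Set.Icc (0:ℝ) 1, ∀ y : ℝ, ∃ y' : ℝ, w x y ≤ w 1 y' := by
  have hK : IsCompact ((Set.Icc (0:ℝ) 1) ×ˢ (Set.Icc (0:ℝ) 1)) :=
    isCompact_Icc.prod isCompact_Icc
  have hKne : ((Set.Icc (0:ℝ) 1) ×ˢ (Set.Icc (0:ℝ) 1)).Nonempty :=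
    ⟨(0, 0), ⟨Set.left_mem_Icc.mpr zero_le_one, Set.left_mem_Icc.mpr zero_le_one⟩⟩
  have hKS : ((Set.Icc (0:ℝ) 1) ×ˢ (Set.Icc (0:ℝ) 1)) ⊆ Strip :=
    Set.prod_mono subset_rfl (Set.subset_univ _)
  obtain ⟨⟨x₀, y₀⟩, hmem, hmax⟩ := hK.exists_isMaxOn hKne
    ((hw.continuousOn).mono hKS)
  have global : ∀ x ∈ Set.Icc (0:ℝ) 1, ∀ y : ℝ, w x y ≤ w x₀ y₀ := by
    intro x hx y
    have h1 : w x y = w x (Int.fract y) := periodic_eq_fract (hper x) y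
    rw [h1]
    have hb : ((x, Int.fract y) : ℝ × ℝ) ∈ (Set.Icc (0:ℝ) 1) ×ˢ (Set.Icc (0:ℝ) 1) :=
      Set.mem_prod.mpr ⟨hx, Set.mem_Icc.mpr ⟨Int.fract_nonneg y, (Int.fract_lt_one y).le⟩⟩
    exact hmax hb
  intro x hx y
  rcases eq_or_lt_of_le hmem.1.2 with h1 | hlt
  · exact ⟨y₀, by rw [← h1]; exact global x hx y⟩
  exfalso
  rcases eq_or_lt_of_le hmem.1.1 with h0 | hgt
  · have hfd : HasDerivWithinAt (fun t => w t y₀) (pdx w 0 y₀) (Set.Icc 0 1) 0 :=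
      (((sliceX hw y₀).differentiableOn (by norm_num)) 0
        (Set.left_mem_Icc.mpr zero_le_one)).hasDerivWithinAt
    have hm : ∀ t ∈ Set.Icc (0:ℝ) 1, w t y₀ ≤ w 0 y₀ := by
      intro t ht; rw [h0]; exact global t ht y₀
    exact absurd (derivWithin_nonpos_left hfd hm) (not_le.mpr (hx0 y₀))
  · have hxIoo : x₀ ∈ Set.Ioo (0:ℝ) 1 := ⟨hgt, hlt⟩
    have hIcc : Set.Icc (0:ℝ) 1 ∈ 𝓝 x₀ := Icc_mem_nhds hgt hlt
    set f : ℝ → ℝ := fun t => w t y₀ with hf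
    have hfC : ContDiffOn ℝ 2 f (Set.Icc (0:ℝ) 1) := sliceX hw y₀
    set Df : ℝ → ℝ := derivWithin f (Set.Icc 0 1) with hDf
    have hDfC1 : ContDiffOn ℝ 1 Df (Set.Icc (0:ℝ) 1) :=
      hfC.derivWithin (uniqueDiffOn_Icc zero_lt_one) (by norm_num)
    have hd : ∀ t ∈ Set.Ioo (0:ℝ) 1, DifferentiableAt ℝ f t := fun t ht =>
      (((hfC.differentiableOn (by norm_num)) t (Set.Ioo_subset_Icc_self ht)).differentiableAt
        (Icc_mem_nhds ht.1 ht.2))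
    have hEv : deriv f =ᶠ[𝓝 x₀] Df := by
      filter_upwards [Ioo_mem_nhds hgt hlt] with t ht
      exact (derivWithin_of_mem_nhds (Icc_mem_nhds ht.1 ht.2)).symm
    have hd2' : DifferentiableAt ℝ Df x₀ :=
      ((hDfC1.differentiableOn (by norm_num)) x₀ (Set.Ioo_subset_Icc_self hxIoo)).differentiableAt hIcc
    have hd2 : DifferentiableAt ℝ (deriv f) x₀ := hd2'.congr_of_eventuallyEq hEv
    have hmaxf : IsLocalMax f x₀ := by
      filter_upwards [hIcc] with t ht
      exact global t ht y₀
    have hxx : pdxx w x₀ y₀ ≤ 0 := by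
      have h1 : deriv (deriv f) x₀ ≤ 0 :=
        secondDeriv_nonpos_of_isLocalMax hxIoo hd hd2 hmaxf
      have h2 : pdxx w x₀ y₀ = deriv (deriv f) x₀ := by
        show derivWithin Df (Set.Icc 0 1) x₀ = _
        rw [derivWithin_of_mem_nhds hIcc]
        exact hEv.symm.deriv_eq
      rw [h2]; exact h1
    set g : ℝ → ℝ := fun s => w x₀ s with hg
    have hgC : ContDiff ℝ 2 g := sliceY hw (Set.Ioo_subset_Icc_self hxIoo)
    have hgd : Differentiable ℝ (deriv g) := by
      have h2 : ContDiff ℝ ((1:WithTop ℕ∞)+1) g := by norm_num at hgC ⊢; exact hgC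
      exact ((contDiff_succ_iff_deriv.mp h2).2.2).differentiable (by norm_num)
    have hmaxg : IsLocalMax g y₀ :=
      Filter.Eventually.of_forall (fun s => global x₀ (Set.Ioo_subset_Icc_self hxIoo) s)
    have hyy : pdyy w x₀ y₀ ≤ 0 := by
      have h1 : deriv (deriv g) y₀ ≤ 0 :=
        secondDeriv_nonpos_of_isLocalMax (a := y₀ - 1) (b := y₀ + 1)
          (by constructor <;> linarith)
          (fun t _ => (hgC.differentiable (by norm_num)).differentiableAt)
          (hgd y₀) hmaxg
      exact h1
    exact absurd (hlap x₀ hxIoo y₀) (not_lt.mpr (by linarith))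

lemma le_supStrip {f : ℝ → ℝ → ℝ} (hper : PeriodicY f) {M : ℝ}
    (hM : ∀ x ∈ Set.Icc (0:ℝ) 1, ∀ y ∈ Set.Icc (0:ℝ) 1, |f x y| ≤ M) :
    ∀ x ∈ Set.Icc (0:ℝ) 1, ∀ y : ℝ, |f x y| ≤ supStrip f := by
  have hbd : BddAbove {r : ℝ | ∃ x ∈ Set.Icc (0:ℝ) 1, ∃ y : ℝ, r = |f x y|} := by
    refine ⟨M, ?_⟩
    rintro r ⟨x, hx, y, rfl⟩
    rw [periodic_eq_fract (hper x) y]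
    exact hM x hx _ (Set.mem_Icc.mpr ⟨Int.fract_nonneg y, (Int.fract_lt_one y).le⟩)
  intro x hx y
  exact le_csSup hbd ⟨x, hx, y, rfl⟩

lemma le_supCirc {f : ℝ → ℝ} (hper : Function.Periodic f 1)
    (hc : ContinuousOn f (Set.Icc 0 1)) : ∀ y : ℝ, |f y| ≤ supCirc f := by
  obtain ⟨M, hM⟩ := isCompact_Icc.exists_bound_of_continuousOn hc
  have hbd : BddAbove {r : ℝ | ∃ y : ℝ, r = |f y|} := by
    refine ⟨M, ?_⟩
    rintro r ⟨y, rfl⟩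
    rw [periodic_eq_fract hper y]
    simpa using hM _ (Set.mem_Icc.mpr ⟨Int.fract_nonneg y, (Int.fract_lt_one y).le⟩)
  intro y
  exact le_csSup hbd ⟨y, rfl⟩

lemma per_pdx {v : ℝ → ℝ → ℝ} (h : PeriodicY v) : PeriodicY (pdx v) := by
  intro x y
  simp only [pdx]
  congr 1
  funext t
  exact h t y

lemma per_pdxx {v : ℝ → ℝ → ℝ} (h : PeriodicY v) : PeriodicY (pdxx v) := by
  intro x y
  simp only [pdxx]
  congr 1
  funext t
  exact per_pdx h t y

lemma per_pdy {v : ℝ → ℝ → ℝ} (h : PeriodicY v) : PeriodicY (pdy v) := by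
  intro x y
  exact periodic_deriv (h x) y

lemma per_pdyy {v : ℝ → ℝ → ℝ} (h : PeriodicY v) : PeriodicY (pdyy v) := by
  intro x y
  exact periodic_deriv (fun s => per_pdy h x s) y

lemma per_lap {v : ℝ → ℝ → ℝ} (h : PeriodicY v) : PeriodicY (lap v) := by
  intro x y
  simp only [lap, per_pdxx h x y, per_pdyy h x y]

lemma pdx_eq_fderivWithin {v : ℝ → ℝ → ℝ}
    (hv : ContDiffOn ℝ 2 (fun p : ℝ × ℝ => v p.1 p.2) Strip)
    {x : ℝ} (hx : x ∈ Set.Icc (0:ℝ) 1) (y : ℝ) :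
    pdx v x y = (fderivWithin ℝ (fun p : ℝ × ℝ => v p.1 p.2) Strip (x, y)) (1, 0) := by
  have hmem : ((x, y) : ℝ × ℝ) ∈ Strip := ⟨hx, Set.mem_univ _⟩
  have hF : HasFDerivWithinAt (fun p : ℝ × ℝ => v p.1 p.2)
      (fderivWithin ℝ (fun p : ℝ × ℝ => v p.1 p.2) Strip (x, y)) Strip (x, y) :=
    ((hv.differentiableOn (by norm_num)) (x, y) hmem).hasFDerivWithinAt
  have h1 : HasDerivWithinAt (fun t : ℝ => ((t, y) : ℝ × ℝ)) (((1:ℝ), (0:ℝ)) : ℝ × ℝ)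
      (Set.Icc 0 1) x :=
    ((hasDerivAt_id x).prodMk (hasDerivAt_const x y)).hasDerivWithinAt
  have hcomp : HasDerivWithinAt (fun t => v t y)
      ((fderivWithin ℝ (fun p : ℝ × ℝ => v p.1 p.2) Strip (x, y)) (1, 0)) (Set.Icc 0 1) x :=
    by have := hF.comp_hasDerivWithinAt x h1 (fun t ht => (⟨ht, Set.mem_univ _⟩ : ((t, y) : ℝ × ℝ) ∈ Strip)); exact this
  exact hcomp.derivWithin (uniqueDiffOn_Icc zero_lt_one x hx)

lemma cont_pdx0 {v : ℝ → ℝ → ℝ}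
    (hv : ContDiffOn ℝ 2 (fun p : ℝ × ℝ => v p.1 p.2) Strip) :
    ContinuousOn (fun y => pdx v 0 y) (Set.Icc 0 1) := by
  have hUD : UniqueDiffOn ℝ Strip := (uniqueDiffOn_Icc zero_lt_one).prod uniqueDiffOn_univ
  have hvf := hv.continuousOn_fderivWithin hUD (by norm_num)
  have h1 : ContinuousOn
      (fun y : ℝ => (fderivWithin ℝ (fun p : ℝ × ℝ => v p.1 p.2) Strip (0, y)) ((1:ℝ), (0:ℝ)))
      (Set.Icc 0 1) := by
    apply Continuous.comp_continuousOn
      (g := fun L : (ℝ × ℝ) →L[ℝ] ℝ => L ((1:ℝ), (0:ℝ)))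
    · exact (ContinuousLinearMap.apply ℝ ℝ (((1:ℝ), (0:ℝ)) : ℝ × ℝ)).continuous
    · exact hvf.comp ((continuous_const.prodMk continuous_id).continuousOn)
        (fun y _ => ⟨Set.left_mem_Icc.mpr zero_le_one, Set.mem_univ _⟩)
  exact h1.congr (fun y _ => pdx_eq_fderivWithin hv (Set.left_mem_Icc.mpr zero_le_one) y)

lemma pdx_neg {v : ℝ → ℝ → ℝ} {x : ℝ} (hx : x ∈ Set.Icc (0:ℝ) 1) (y : ℝ) :
    pdx (fun a b => -v a b) x y = -pdx v x y := by
  show derivWithin (fun t => -v t y) (Set.Icc 0 1) x = -derivWithin (fun t => v t y) (Set.Icc 0 1) x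
  exact derivWithin.neg

lemma pdxx_neg {v : ℝ → ℝ → ℝ} {x : ℝ} (hx : x ∈ Set.Icc (0:ℝ) 1) (y : ℝ) :
    pdxx (fun a b => -v a b) x y = -pdxx v x y := by
  simp only [pdxx]
  have h1 : derivWithin (fun t => pdx (fun a b => -v a b) t y) (Set.Icc 0 1) x
      = derivWithin (fun t => -pdx v t y) (Set.Icc 0 1) x :=
    derivWithin_congr (fun t ht => pdx_neg ht y) (pdx_neg hx y)
  rw [h1]
  exact derivWithin.neg

lemma pdy_neg (v : ℝ → ℝ → ℝ) (x y : ℝ) :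
    pdy (fun a b => -v a b) x y = -pdy v x y := by
  show deriv (fun s => -v x s) y = -deriv (fun s => v x s) y
  exact deriv.neg

lemma pdyy_neg (v : ℝ → ℝ → ℝ) (x y : ℝ) :
    pdyy (fun a b => -v a b) x y = -pdyy v x y := by
  simp only [pdyy]
  have h1 : (fun s => pdy (fun a b => -v a b) x s) = (fun s => -pdy v x s) :=
    funext (fun s => pdy_neg v x s)
  rw [h1]
  exact deriv.neg

lemma lap_neg {v : ℝ → ℝ → ℝ} {x : ℝ} (hx : x ∈ Set.Icc (0:ℝ) 1) (y : ℝ) :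
    lap (fun a b => -v a b) x y = -lap v x y := by
  simp only [lap, pdxx_neg hx y, pdyy_neg v x y]
  ring

lemma mainBound {F A B : ℝ} (u : ℝ → ℝ → ℝ) (hper : PeriodicY u)
    (hu : ContDiffOn ℝ 2 (fun p : ℝ × ℝ => u p.1 p.2) Strip)
    (hF : ∀ x ∈ Set.Icc (0:ℝ) 1, ∀ y : ℝ, |lap u x y| ≤ F)
    (hA : ∀ y : ℝ, |pdx u 0 y| ≤ A) (hB : ∀ y : ℝ, |u 1 y| ≤ B) :
    ∀ x ∈ Set.Icc (0:ℝ) 1, ∀ y : ℝ, u x y ≤ F + A + B := by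
  have hF0 : 0 ≤ F := le_trans (abs_nonneg _) (hF 0 (Set.left_mem_Icc.mpr zero_le_one) 0)
  have hA0 : 0 ≤ A := le_trans (abs_nonneg _) (hA 0)
  have hB0 : 0 ≤ B := le_trans (abs_nonneg _) (hB 0)
  intro x hx y
  refine le_of_forall_pos_le_add (fun ε hε => ?_)
  set δ := ε / 2 with hδ
  have hδ0 : 0 < δ := by positivity
  set c := -(B + A + F/2) with hc
  set d := A + δ with hd
  set e := (F + δ)/2 with he
  set gfun : ℝ → ℝ := fun t => c + (d * t + e * t^2) with hgfun
  have hg : ∀ t : ℝ, HasDerivAt gfun (d + 2*e*t) t := by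
    intro t
    have h1 : HasDerivAt (fun t : ℝ => d * t) d t := by simpa using (hasDerivAt_id t).const_mul d
    have h2 : HasDerivAt (fun t : ℝ => e * t^2) (e * (2*t)) t := by
      simpa using (hasDerivAt_pow 2 t).const_mul e
    have h3 : HasDerivAt gfun (d + e * (2*t)) t := (h1.add h2).const_add c
    convert h3 using 1
    ring
  have hgC : ContDiff ℝ 2 gfun := by
    simp only [hgfun]; fun_prop
  set w : ℝ → ℝ → ℝ := fun a b => u a b + gfun a with hw
  have hwper : PeriodicY w := by intro a b; simp only [hw]; rw [hper a b]
  have hwC : ContDiffOn ℝ 2 (fun p : ℝ × ℝ => w p.1 p.2) Strip :=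
    hu.add ((hgC.comp contDiff_fst).contDiffOn)
  have hpdxw : ∀ a ∈ Set.Icc (0:ℝ) 1, ∀ b : ℝ, pdx w a b = pdx u a b + (d + 2*e*a) := by
    intro a ha b
    have hU := uniqueDiffOn_Icc (zero_lt_one) a ha
    have h1 : pdx w a b = derivWithin (fun t => u t b + gfun t) (Set.Icc 0 1) a := rfl
    rw [h1, derivWithin_fun_add
      (((sliceX hu b).differentiableOn (by norm_num)) a ha)
      ((hg a).differentiableAt.differentiableWithinAt)]
    congr 1
    rw [(hg a).differentiableAt.derivWithin hU]
    exact (hg a).deriv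
  have hpdxxw : ∀ a ∈ Set.Icc (0:ℝ) 1, ∀ b : ℝ, pdxx w a b = pdxx u a b + 2*e := by
    intro a ha b
    have hU := uniqueDiffOn_Icc (zero_lt_one) a ha
    have hlin : ∀ t : ℝ, HasDerivAt (fun t : ℝ => d + 2*e*t) (2*e) t := by
      intro t; simpa using ((hasDerivAt_id t).const_mul (2*e)).const_add d
    have h1 : pdxx w a b = derivWithin (fun t => pdx u t b + (d + 2*e*t)) (Set.Icc 0 1) a :=
      derivWithin_congr (fun t ht => hpdxw t ht b) (hpdxw a ha b)
    have hfd : DifferentiableWithinAt ℝ (fun t => pdx u t b) (Set.Icc 0 1) a :=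
      ((sliceX hu b).derivWithin (m := 1) (uniqueDiffOn_Icc zero_lt_one) (by norm_num)).differentiableOn
        (by norm_num) a ha
    rw [h1, derivWithin_fun_add hfd ((hlin a).differentiableAt.differentiableWithinAt)]
    congr 1
    rw [(hlin a).differentiableAt.derivWithin hU]
    exact (hlin a).deriv
  have hpdyyw : ∀ a b : ℝ, pdyy w a b = pdyy u a b := by
    intro a b
    have h1 : ∀ s : ℝ, pdy w a s = pdy u a s := by
      intro s
      show deriv (fun s => u a s + gfun a) s = deriv (fun s => u a s) s
      exact deriv_add_const _
    show deriv (fun s => pdy w a s) b = deriv (fun s => pdy u a s) b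
    rw [funext h1]
  have h2e : 2*e = F + δ := by rw [he]; ring
  obtain ⟨y', hy'⟩ := key_max w hwper hwC
    (fun a ha b => by
      have h := hF a (Set.Ioo_subset_Icc_self ha) b
      have h2 := (abs_le.mp h).1
      have h3 : -F ≤ pdxx u a b + pdyy u a b := by simpa [lap] using h2
      rw [hpdxxw a (Set.Ioo_subset_Icc_self ha) b, hpdyyw a b]
      linarith)
    (fun b => by
      have h2 := (abs_le.mp (hA b)).1
      rw [hpdxw 0 (Set.left_mem_Icc.mpr zero_le_one) b]
      have h0 : (2:ℝ)*e*0 = 0 := by ring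
      rw [h0]
      linarith [hd])
    x hx y
  have hky : u x y + gfun x ≤ u 1 y' + gfun 1 := hy'
  have hgx : c ≤ gfun x := by
    have h1 : 0 ≤ d * x := mul_nonneg (by linarith) hx.1
    have h2 : 0 ≤ e * x^2 := mul_nonneg (by linarith) (sq_nonneg x)
    simp only [hgfun]
    linarith
  have hg1 : gfun 1 = c + d + e := by simp only [hgfun]; ring
  have hB1 := (abs_le.mp (hB y')).2
  have hfin : u x y ≤ B + (A + δ) + (F + δ)/2 := by
    rw [← hd, ← he]
    linarith
  linarith

end AuxProof

/-- sup estimate for the mixed boundary value problem. -/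
theorem mixed_sup_estimate (α : ℝ) (hα : α ∈ Set.Ioo (0:ℝ) 1) :
    ∃ C > 0, ∀ v : ℝ → ℝ → ℝ, MemC2αStrip α v →
      supStrip v ≤ C * (supStrip (lap v) +
        supCirc (fun y => pdx v 0 y) + supCirc (fun y => v 1 y)) := by
  refine ⟨1, one_pos, ?_⟩
  intro v hv
  obtain ⟨⟨hper, hsm⟩, hHxx, hHxy, hHyy⟩ := hv
  set F := supStrip (lap v) with hFdef
  set A := supCirc (fun y => pdx v 0 y) with hAdef
  set B := supCirc (fun y => v 1 y) with hBdef
  obtain ⟨C1, h1⟩ := hHxx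
  obtain ⟨C2, h2⟩ := hHyy
  have hsq : ∀ x ∈ Set.Icc (0:ℝ) 1, ∀ y ∈ Set.Icc (0:ℝ) 1,
      |lap v x y| ≤ (|pdxx v 0 0| + |C1|) + (|pdyy v 0 0| + |C2|) := by
    intro x hx y hy
    have hd1 : dist ((x, y) : ℝ × ℝ) ((0, 0) : ℝ × ℝ) ≤ 1 := by
      rw [Prod.dist_eq]
      apply sup_le
      · rw [Real.dist_eq, sub_zero, abs_of_nonneg hx.1]; exact hx.2
      · rw [Real.dist_eq, sub_zero, abs_of_nonneg hy.1]; exact hy.2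
    have hpow : dist ((x, y) : ℝ × ℝ) ((0, 0) : ℝ × ℝ) ^ α ≤ 1 :=
      Real.rpow_le_one dist_nonneg hd1 hα.1.le
    have t0 : 0 ≤ dist ((x, y) : ℝ × ℝ) ((0, 0) : ℝ × ℝ) ^ α :=
      Real.rpow_nonneg dist_nonneg α
    have e1 := h1 x hx 0 (Set.left_mem_Icc.mpr zero_le_one) y 0
    have e2 := h2 x hx 0 (Set.left_mem_Icc.mpr zero_le_one) y 0
    have step1 : C1 * dist ((x, y) : ℝ × ℝ) ((0, 0) : ℝ × ℝ) ^ α ≤ |C1| := by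
      calc C1 * dist ((x, y) : ℝ × ℝ) ((0, 0) : ℝ × ℝ) ^ α
          ≤ |C1| * dist ((x, y) : ℝ × ℝ) ((0, 0) : ℝ × ℝ) ^ α :=
            mul_le_mul_of_nonneg_right (le_abs_self C1) t0
        _ ≤ |C1| * 1 := mul_le_mul_of_nonneg_left hpow (abs_nonneg C1)
        _ = |C1| := mul_one _
    have step2 : C2 * dist ((x, y) : ℝ × ℝ) ((0, 0) : ℝ × ℝ) ^ α ≤ |C2| := by
      calc C2 * dist ((x, y) : ℝ × ℝ) ((0, 0) : ℝ × ℝ) ^ α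
          ≤ |C2| * dist ((x, y) : ℝ × ℝ) ((0, 0) : ℝ × ℝ) ^ α :=
            mul_le_mul_of_nonneg_right (le_abs_self C2) t0
        _ ≤ |C2| * 1 := mul_le_mul_of_nonneg_left hpow (abs_nonneg C2)
        _ = |C2| := mul_one _
    have e1' : |pdxx v x y| ≤ |pdxx v 0 0| + |C1| := by
      have h := abs_sub_abs_le_abs_sub (pdxx v x y) (pdxx v 0 0)
      linarith
    have e2' : |pdyy v x y| ≤ |pdyy v 0 0| + |C2| := by
      have h := abs_sub_abs_le_abs_sub (pdyy v x y) (pdyy v 0 0)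
      linarith
    have habs : |lap v x y| ≤ |pdxx v x y| + |pdyy v x y| := by
      simp only [lap]
      exact abs_add_le _ _
    linarith
  have hFpt : ∀ x ∈ Set.Icc (0:ℝ) 1, ∀ y : ℝ, |lap v x y| ≤ F :=
    le_supStrip (per_lap hper) hsq
  have hApt : ∀ y : ℝ, |pdx v 0 y| ≤ A :=
    le_supCirc (fun y => per_pdx hper 0 y) (cont_pdx0 hsm)
  have hBpt : ∀ y : ℝ, |v 1 y| ≤ B :=
    le_supCirc (fun y => hper 1 y)
      ((sliceY hsm (Set.right_mem_Icc.mpr zero_le_one)).continuous.continuousOn)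
  have hmain := mainBound v hper hsm hFpt hApt hBpt
  have hsmneg : ContDiffOn ℝ 2 (fun p : ℝ × ℝ => (fun a b => -v a b) p.1 p.2) Strip := hsm.neg
  have hneg := mainBound (fun a b => -v a b) (fun a b => by simp [hper a b]) hsmneg
    (fun x hx y => by rw [lap_neg hx y, abs_neg]; exact hFpt x hx y)
    (fun y => by rw [pdx_neg (Set.left_mem_Icc.mpr zero_le_one) y, abs_neg]; exact hApt y)
    (fun y => by show |-v 1 y| ≤ B; rw [abs_neg]; exact hBpt y)
  rw [one_mul]
  apply Real.sSup_le
  · rintro r ⟨x, hx, y, rfl⟩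
    have hup := hmain x hx y
    have hlo : -v x y ≤ F + A + B := hneg x hx y
    rw [abs_le]
    constructor <;> linarith
  · have h1 : 0 ≤ F := le_trans (abs_nonneg _) (hFpt 0 (Set.left_mem_Icc.mpr zero_le_one) 0)
    have h2 : 0 ≤ A := le_trans (abs_nonneg _) (hApt 0)
    have h3 : 0 ≤ B := le_trans (abs_nonneg _) (hBpt 0)
    linarith
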